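/- arXiv:1604.08155 — 7 statements merged into one kernel-verified Lean document; each statement's English description precedes it below -/
import Mathlib

section
/- If a trace satisfies the non-overlap property L_prop and the weakened constraint L_cons, then it satisfies the full pattern L_patt. Formally: for any trace (σ, τ), if (σ,τ) ∈ L_prop and (σ,τ) ∈ L_cons then (σ,τ) ∈ L_patt. -/
/-- If a trace satisfies the non-overlap property `L_prop` and the weakened
constraint `L_cons`, then it satisfies the full pattern `L_patt`. -/
theorem Lprop_inter_Lcons_subset_Lpatt {State : Type*} (c e : State → Prop) (l h : ℝ)
    (hl : 0 ≤ l) (hlh : l ≤ h)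
    (σ : ℕ → State) (τ : ℕ → ℝ) (hτ : StrictMono τ)
    (hprop : ∀ i, c (σ i) → ∀ j, j > i → τ j ≤ τ i + h → c (σ j) →
      ∃ k, i < k ∧ k ≤ j ∧ τ i + l ≤ τ k ∧ e (σ k))
    (hcons : ∀ i, c (σ i) → ∃ j, j > i ∧
      ((τ i + l ≤ τ j ∧ τ j ≤ τ i + h ∧ e (σ j)) ∨ (τ j ≤ τ i + h ∧ c (σ j)))) :
    ∀ i, c (σ i) → ∃ j, j > i ∧ τ i + l ≤ τ j ∧ τ j ≤ τ i + h ∧ e (σ j) := by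
  intro i hi
  obtain ⟨j, hj, hcase⟩ := hcons i hi
  rcases hcase with hgood | ⟨hjh, hcj⟩
  · exact ⟨j, hj, hgood⟩
  · obtain ⟨k, hik, hkj, hkl, hek⟩ := hprop i hi j hj hjh hcj
    exact ⟨k, hik, hkl, le_trans (hτ.monotone hkj) hjh, hek⟩
end

section
/- Theorem 2 of the paper: if a set of traces L_M is contained in L_prop, then L_M ∩ L_cons = L_M ∩ L_patt. -/
/-- Theorem 2: if `L_M ⊆ L_prop` then `L_M ∩ L_cons = L_M ∩ L_patt`. -/
theorem theorem2 {State : Type*} (c e : State → Prop) (l h : ℝ)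
    (hl : 0 ≤ l) (hlh : l ≤ h)
    (Lpatt Lcons Lprop LM : Set ((ℕ → State) × (ℕ → ℝ)))
    (hpatt : Lpatt = {p | ∀ i, c (p.1 i) →
      ∃ j, j > i ∧ p.2 i + l ≤ p.2 j ∧ p.2 j ≤ p.2 i + h ∧ e (p.1 j)})
    (hcons : Lcons = {p | ∀ i, c (p.1 i) → ∃ j, j > i ∧
      ((p.2 i + l ≤ p.2 j ∧ p.2 j ≤ p.2 i + h ∧ e (p.1 j)) ∨
        (p.2 j ≤ p.2 i + h ∧ c (p.1 j)))})
    (hprop : Lprop = {p | ∀ i, c (p.1 i) → ∀ j, j > i → p.2 j ≤ p.2 i + h → c (p.1 j) →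
      ∃ k, i < k ∧ k ≤ j ∧ p.2 i + l ≤ p.2 k ∧ e (p.1 k)})
    (hmono : ∀ p ∈ LM, StrictMono p.2)
    (hsub : LM ⊆ Lprop) :
    LM ∩ Lcons = LM ∩ Lpatt := by
  subst hpatt hcons hprop
  ext p
  simp only [Set.mem_inter_iff, Set.mem_setOf_eq]
  constructor
  · rintro ⟨hM, hc⟩
    refine ⟨hM, fun i hi => ?_⟩
    obtain ⟨j, hji, hcase⟩ := hc i hi
    rcases hcase with hgood | ⟨hjh, hcj⟩
    · exact ⟨j, hji, hgood⟩
    · obtain ⟨k, hik, hkj, hlk, hek⟩ := hsub hM i hi j hji hjh hcj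
      exact ⟨k, hik, hlk, le_trans ((hmono p hM).monotone hkj) hjh, hek⟩
  · rintro ⟨hM, hp⟩
    refine ⟨hM, fun i hi => ?_⟩
    obtain ⟨j, hji, h1, h2, h3⟩ := hp i hi
    exact ⟨j, hji, Or.inl ⟨h1, h2, h3⟩⟩
end

section
/- Combining Example 1 with Theorem 2: L_nm ∩ L_start ∩ L_stopc = L_nm ∩ L_start ∩ L_stop, where L_stop is the full pattern 'whenever thread_start occurs, thread_stop occurs during [10,20]' and L_stopc is its weakened non-overlapping version. -/
/-- Example 1 + Theorem 2: `L_nm ∩ L_start ∩ L_stopc = L_nm ∩ L_start ∩ L_stop`. -/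
theorem example1_theorem2 {State : Type*}
    (new_message thread_start thread_stop : State → Prop)
    (Lnm Lstart Lstop Lstopc : Set ((ℕ → State) × (ℕ → ℝ)))
    (hnm : Lnm = {p | ∀ i, new_message (p.1 i) →
      ¬ ∃ j, j > i ∧ p.2 j < p.2 i + 50 ∧ new_message (p.1 j)})
    (hstart : Lstart = {p | ∀ i, new_message (p.1 i) ↔ thread_start (p.1 i)})
    (hstop : Lstop = {p | ∀ i, thread_start (p.1 i) →
      ∃ j, j > i ∧ p.2 i + 10 ≤ p.2 j ∧ p.2 j ≤ p.2 i + 20 ∧ thread_stop (p.1 j)})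
    (hstopc : Lstopc = {p | ∀ i, thread_start (p.1 i) → ∃ j, j > i ∧
      ((p.2 i + 10 ≤ p.2 j ∧ p.2 j ≤ p.2 i + 20 ∧ thread_stop (p.1 j)) ∨
        (p.2 j ≤ p.2 i + 20 ∧ thread_start (p.1 j)))})
    (hmono : ∀ p ∈ Lnm ∩ Lstart, StrictMono p.2) :
    Lnm ∩ Lstart ∩ Lstopc = Lnm ∩ Lstart ∩ Lstop := by
  subst hnm hstart hstop hstopc
  ext p
  simp only [Set.mem_inter_iff, Set.mem_setOf_eq]
  constructor
  · rintro ⟨⟨h1, h2⟩, h3⟩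
    refine ⟨⟨h1, h2⟩, fun i hi => ?_⟩
    obtain ⟨j, hj, hcase⟩ := h3 i hi
    rcases hcase with h | ⟨hle, hts⟩
    · exact ⟨j, hj, h⟩
    · exfalso
      exact h1 i ((h2 i).2 hi) ⟨j, hj, by linarith, (h2 j).2 hts⟩
  · rintro ⟨⟨h1, h2⟩, h3⟩
    refine ⟨⟨h1, h2⟩, fun i hi => ?_⟩
    obtain ⟨j, hj, h⟩ := h3 i hi
    exact ⟨j, hj, Or.inl h⟩
end

section
/- Soundness direction of Theorem 1 (Lemma 2, abstracted): consider a trace (σ, τ) with observer variables rec_c, run, timer, pass satisfying the observer constraints. If (σ,τ) ∈ L_patt, then pass holds at every step, i.e., timer_n ≤ h for all n. -/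
/-- Soundness direction of Theorem 1: if the trace is in `L_patt`, then the
observer's `pass` variable (`timer n ≤ h`) is invariant. -/
theorem theorem1_soundness {State : Type*} (c e : State → Prop) (l h : ℝ)
    (hl : 0 ≤ l) (hlh : l ≤ h)
    (σ : ℕ → State) (τ : ℕ → ℝ) (hτ : StrictMono τ)
    (rec_c : ℕ → Prop) (run : ℕ → Prop) (timer : ℕ → ℝ)
    (hrec : ∀ n, rec_c n → c (σ n))
    (hrun0 : run 0 ↔ rec_c 0)
    (hrun : ∀ n, run (n + 1) ↔
      (¬ (run n ∧ e (σ (n + 1)) ∧ l ≤ timer (n + 1) ∧ timer (n + 1) ≤ h) ∧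
        (rec_c (n + 1) ∨ run n)))
    (htimer0 : timer 0 = 0)
    (htimer : ∀ n, (run n → timer (n + 1) = timer n + (τ (n + 1) - τ n)) ∧
      (¬ run n → timer (n + 1) = 0))
    (hpatt : ∀ i, c (σ i) → ∃ j, j > i ∧ τ i + l ≤ τ j ∧ τ j ≤ τ i + h ∧ e (σ j)) :
    ∀ n, timer n ≤ h := by
  have key : ∀ n, run n → ∃ i, i ≤ n ∧ c (σ i) ∧
      (∀ j, i ≤ j → j ≤ n → timer j = τ j - τ i) ∧
      (∀ j, i < j → j ≤ n → ¬(e (σ j) ∧ l ≤ timer j ∧ timer j ≤ h)) := by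
    intro n
    induction n with
    | zero =>
      intro hr
      refine ⟨0, le_refl 0, hrec 0 (hrun0.mp hr), ?_, ?_⟩
      · intro j h1 h2
        have : j = 0 := Nat.le_zero.mp h2
        subst this; simp [htimer0]
      · intro j h1 h2; omega
    | succ n ih =>
      intro hr
      obtain ⟨hnreset, hor⟩ := (hrun n).mp hr
      by_cases hrn : run n
      · obtain ⟨i, hi, hc, htm, hne⟩ := ih hrn
        refine ⟨i, by omega, hc, ?_, ?_⟩
        · intro j h1 h2
          rcases Nat.lt_or_ge j (n + 1) with hlt | hge
          · exact htm j h1 (by omega)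
          · have hj : j = n + 1 := by omega
            subst hj
            rw [(htimer n).1 hrn, htm n hi le_rfl]; ring
        · intro j h1 h2
          rcases Nat.lt_or_ge j (n + 1) with hlt | hge
          · exact hne j h1 (by omega)
          · have hj : j = n + 1 := by omega
            subst hj
            intro ⟨he, hle, hhe⟩
            exact hnreset ⟨hrn, he, hle, hhe⟩
      · have hrec' : rec_c (n + 1) := hor.resolve_right hrn
        refine ⟨n + 1, le_refl _, hrec _ hrec', ?_, ?_⟩
        · intro j h1 h2
          have : j = n + 1 := by omega
          subst this
          rw [(htimer n).2 hrn]; ring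
        · intro j h1 h2; omega
  intro n
  match n with
  | 0 => rw [htimer0]; linarith
  | Nat.succ m =>
    by_cases hrm : run m
    · obtain ⟨i, hi, hc, htm, hne⟩ := key m hrm
      obtain ⟨j, hj, hjl, hjh, hje⟩ := hpatt i hc
      have ht1 : timer (m + 1) = τ (m + 1) - τ i := by
        rw [(htimer m).1 hrm, htm m hi le_rfl]; ring
      by_cases hjm : j ≤ m
      · exact absurd ⟨hje, by rw [htm j (le_of_lt hj) hjm]; linarith,
          by rw [htm j (le_of_lt hj) hjm]; linarith⟩ (hne j hj hjm)
      · have hmo : τ (m + 1) ≤ τ j := hτ.monotone (by omega)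
        rw [ht1]; linarith
    · rw [(htimer m).2 hrm]; linarith
end

section
/- Completeness direction of Theorem 1 (Lemma 1, abstracted): if a trace (σ, τ) is non-Zeno, violates L_patt, and the observer's rec_c records exactly the violating occurrence of c (rec_c holds only at the violating index i where c holds and no e occurs in window [τ_i + l, τ_i + h] after i), then pass eventually fails: there exists n with timer_n > h. -/
/-- Completeness direction of Theorem 1: if the trace violates `L_patt` at index
`i` and the observer records exactly that occurrence, `pass` eventually fails. -/
theorem theorem1_completeness {State : Type*} (c e : State → Prop) (l h : ℝ)
    (hl : 0 ≤ l) (hlh : l ≤ h)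
    (σ : ℕ → State) (τ : ℕ → ℝ) (hτ : StrictMono τ)
    (hnz : ∀ v : ℝ, ∃ k, v < τ k)
    (i : ℕ) (hi : c (σ i))
    (hviol : ∀ j, j > i → τ i + l ≤ τ j → τ j ≤ τ i + h → ¬ e (σ j))
    (rec_c : ℕ → Prop) (run : ℕ → Prop) (timer : ℕ → ℝ)
    (hrec : ∀ n, rec_c n ↔ n = i)
    (hrun0 : run 0 ↔ rec_c 0)
    (hrun : ∀ n, run (n + 1) ↔
      (¬ (run n ∧ e (σ (n + 1)) ∧ l ≤ timer (n + 1) ∧ timer (n + 1) ≤ h) ∧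
        (rec_c (n + 1) ∨ run n)))
    (htimer0 : timer 0 = 0)
    (htimer : ∀ n, (run n → timer (n + 1) = timer n + (τ (n + 1) - τ n)) ∧
      (¬ run n → timer (n + 1) = 0)) :
    ∃ n, timer n > h := by
  -- before i, run is false
  have hbefore : ∀ n, n < i → ¬ run n := by
    intro n
    induction n with
    | zero =>
      intro h0 hr
      exact absurd ((hrec 0).mp ((hrun0).mp hr)) (by omega)
    | succ m ih =>
      intro hlt hr
      rcases ((hrun m).mp hr).2 with hc | hm
      · exact absurd ((hrec (m+1)).mp hc) (Nat.ne_of_lt hlt)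
      · exact ih (Nat.lt_of_succ_lt hlt) hm
  -- from i on, run holds and timer n = τ n - τ i
  have key : ∀ n, i ≤ n → run n ∧ timer n = τ n - τ i := by
    intro n
    induction n with
    | zero =>
      intro h0
      have hi0 : i = 0 := Nat.le_zero.mp h0
      subst hi0
      refine ⟨hrun0.mpr ((hrec 0).mpr rfl), by simp [htimer0]⟩
    | succ m ih =>
      intro hle
      rcases Nat.lt_or_ge i (m+1) with hlt | hge
      · -- i ≤ m
        have him : i ≤ m := Nat.lt_succ_iff.mp hlt
        obtain ⟨hrm, htm⟩ := ih him
        have ht1 : timer (m+1) = τ (m+1) - τ i := by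
          rw [(htimer m).1 hrm, htm]; ring
        have hr1 : run (m+1) := by
          rw [hrun]
          refine ⟨?_, Or.inr hrm⟩
          rintro ⟨_, he, h1, h2⟩
          exact hviol (m+1) hlt (by linarith [ht1]) (by linarith [ht1]) he
        exact ⟨hr1, ht1⟩
      · -- i = m + 1
        have heq : i = m + 1 := le_antisymm hle hge
        have hnm : ¬ run m := hbefore m (by omega)
        have ht1 : timer (m+1) = 0 := (htimer m).2 hnm
        have hr1 : run (m+1) := by
          rw [hrun]
          exact ⟨fun hcon => hnm hcon.1, Or.inl ((hrec (m+1)).mpr heq.symm)⟩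
        refine ⟨hr1, by rw [ht1, ← heq]; ring⟩
  obtain ⟨k, hk⟩ := hnz (τ i + h)
  have hik : i ≤ k := by
    by_contra hc
    have := hτ (Nat.lt_of_not_le hc)
    linarith
  obtain ⟨_, htk⟩ := key k hik
  exact ⟨k, by rw [htk]; linarith⟩
end

section
/- Run stays active until e-window hit: with the observer constraints and rec_c holding only at index i, run holds at all steps j ≥ i such that no step k with i < k ≤ j has e (σ k) with l ≤ τ k − τ i ≤ h. -/
/-- `run` stays active (and the timer tracks elapsed time) until an `e`-occurrence
falls in the window `[l, h]` after the recorded occurrence at index `i`. -/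
theorem run_stays_active {State : Type*} (c e : State → Prop) (l h : ℝ)
    (hl : 0 ≤ l) (hlh : l ≤ h)
    (σ : ℕ → State) (τ : ℕ → ℝ) (hτ : StrictMono τ)
    (i : ℕ) (rec_c : ℕ → Prop) (run : ℕ → Prop) (timer : ℕ → ℝ)
    (hrec : ∀ n, rec_c n ↔ n = i)
    (hrun0 : run 0 ↔ rec_c 0)
    (hrun : ∀ n, run (n + 1) ↔
      (¬ (run n ∧ e (σ (n + 1)) ∧ l ≤ timer (n + 1) ∧ timer (n + 1) ≤ h) ∧
        (rec_c (n + 1) ∨ run n)))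
    (htimer0 : timer 0 = 0)
    (htimer : ∀ n, (run n → timer (n + 1) = timer n + (τ (n + 1) - τ n)) ∧
      (¬ run n → timer (n + 1) = 0)) :
    ∀ j, i ≤ j →
      (∀ k, i < k → k ≤ j → ¬ (e (σ k) ∧ l ≤ τ k - τ i ∧ τ k - τ i ≤ h)) →
      run j ∧ timer j = τ j - τ i := by
  have hnot : ∀ n, n < i → ¬ run n := by
    intro n
    induction n with
    | zero => intro h0 hr; exact absurd ((hrec 0).mp (hrun0.mp hr)) (by omega)
    | succ n ih =>
      intro hlt hr
      rcases ((hrun n).mp hr).2 with hc | hr'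
      · exact absurd ((hrec _).mp hc) (by omega)
      · exact ih (by omega) hr'
  have base : run i ∧ timer i = τ i - τ i := by
    rcases Nat.eq_zero_or_pos i with h0 | hpos
    · subst h0
      exact ⟨hrun0.mpr ((hrec 0).mpr rfl), by simp [htimer0]⟩
    · obtain ⟨m, rfl⟩ : ∃ m, i = m + 1 := ⟨i - 1, by omega⟩
      have hnm : ¬ run m := hnot m (by omega)
      constructor
      · exact (hrun m).mpr ⟨fun hh => hnm hh.1, Or.inl ((hrec _).mpr rfl)⟩
      · rw [(htimer m).2 hnm]; ring
  intro j hij hk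
  induction j with
  | zero =>
    have : i = 0 := by omega
    subst this; simpa using base
  | succ j ih =>
    rcases Nat.lt_or_ge i (j+1) with hlt | hge
    · have hij' : i ≤ j := by omega
      obtain ⟨hrj, htj⟩ := ih hij' (fun k hk1 hk2 => hk k hk1 (by omega))
      have ht' : timer (j+1) = τ (j+1) - τ i := by
        rw [(htimer j).1 hrj, htj]; ring
      refine ⟨(hrun j).mpr ⟨?_, Or.inr hrj⟩, ht'⟩
      rintro ⟨_, he, h1, h2⟩
      exact hk (j+1) hlt le_rfl ⟨he, by rw [← ht']; exact ⟨h1, h2⟩⟩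
    · have : i = j + 1 := by omega
      subst this; exact base
end

section
/- Periodic-with-jitter implies sporadic: if event c occurs each period P with jitter J (there is a schedule of nominal times n·P and each occurrence of c happens within [n·P − J, n·P + J] for distinct n, with each nominal slot used at most once), and P > 2J, then c occurs sporadic with inter-arrival time P − 2J: any two occurrences of c are at least P − 2J apart in time. -/
/-- Periodic-with-jitter implies sporadic with inter-arrival time `P - 2J`. -/
theorem periodic_jitter_implies_sporadic {State : Type*} (c : State → Prop)
    (P J : ℝ) (hP : 0 < P) (hJ : 0 ≤ J) (hPJ : 2 * J < P)
    (σ : ℕ → State) (τ : ℕ → ℝ) (hτ : StrictMono τ)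
    (slot : {i : ℕ // c (σ i)} → ℕ) (hinj : Function.Injective slot)
    (hslot : ∀ p : {i : ℕ // c (σ i)}, |τ p.1 - (slot p : ℝ) * P| ≤ J) :
    ∀ i j, i < j → ∀ (hi : c (σ i)) (hj : c (σ j)), τ j - τ i ≥ P - 2 * J := by
  intro i j hij hi hj
  set pi : {i : ℕ // c (σ i)} := ⟨i, hi⟩
  set pj : {i : ℕ // c (σ i)} := ⟨j, hj⟩
  have hne : slot pi ≠ slot pj := fun h => by
    have := hinj h
    simp [pi, pj] at this
    omega
  have hti := hslot pi
  have htj := hslot pj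
  rw [abs_le] at hti htj
  have hτij : τ i < τ j := hτ hij
  have hlt : slot pi < slot pj := by
    by_contra h
    push_neg at h
    have h1 : slot pj + 1 ≤ slot pi := by omega
    have h2 : ((slot pj : ℝ) + 1) * P ≤ (slot pi : ℝ) * P := by
      apply mul_le_mul_of_nonneg_right _ hP.le
      exact_mod_cast h1
    simp only [pi, pj] at hti htj
    nlinarith
  have h2 : ((slot pi : ℝ) + 1) * P ≤ (slot pj : ℝ) * P := by
    apply mul_le_mul_of_nonneg_right _ hP.le
    exact_mod_cast hlt
  simp only [pi, pj] at hti htj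
  nlinarith
end
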